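/- In ℤ⁸, the set S = {v₁,...,v₈} of 0/1-vectors with supports {3,4,5}, {1,4,5}, {1,2,5}, {1,2,3}, {2,3,4}, {3,4,6}, {2,4,7}, {2,3,8} is not saturated: v = (1,1,1,1,1,0,0,0) equals (1/3)(v₁+v₂+v₃+v₄+v₅) and equals 2v₅ − v₆ − v₇ − v₈, but v is not a nonnegative-integer combination of v₁,...,v₈. -/
import Mathlib


/-- The quasi-basis vectors `eᵢ = εᵢ − (1/8)∑ⱼ εⱼ` in `ℚ⁸`; they satisfy `∑ᵢ eᵢ = 0`. -/
def e (i : Fin 8) : Fin 8 → ℚ :=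
  fun j => (if j = i then 1 else 0) - 1 / 8

/-- The eight 0/1-vectors (in quasi-coordinates) with supports
`{3,4,5}, {1,4,5}, {1,2,5}, {1,2,3}, {2,3,4}, {3,4,6}, {2,4,7}, {2,3,8}` (1-indexed). -/
def w : Fin 8 → (Fin 8 → ℚ) :=
  ![e 2 + e 3 + e 4, e 0 + e 3 + e 4, e 0 + e 1 + e 4, e 0 + e 1 + e 2,
    e 1 + e 2 + e 3, e 2 + e 3 + e 5, e 1 + e 3 + e 6, e 1 + e 2 + e 7]

lemma w0 : w 0 = e 2 + e 3 + e 4 := rfl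
lemma w1 : w 1 = e 0 + e 3 + e 4 := rfl
lemma w2 : w 2 = e 0 + e 1 + e 4 := rfl
lemma w3 : w 3 = e 0 + e 1 + e 2 := rfl
lemma w4 : w 4 = e 1 + e 2 + e 3 := rfl
lemma w5 : w 5 = e 2 + e 3 + e 5 := rfl
lemma w6 : w 6 = e 1 + e 3 + e 6 := rfl
lemma w7 : w 7 = e 1 + e 2 + e 7 := rfl

/-- This set is not saturated: `v = e₁+e₂+e₃+e₄+e₅` equals `(1/3)(v₁+v₂+v₃+v₄+v₅)` and
equals `2v₅ − v₆ − v₇ − v₈`, but `v` is not a nonnegative-integer combination of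
`v₁,...,v₈`. -/
theorem n8k3_NSS :
    e 0 + e 1 + e 2 + e 3 + e 4 = ((1:ℚ)/3) • (w 0 + w 1 + w 2 + w 3 + w 4) ∧
    e 0 + e 1 + e 2 + e 3 + e 4 = (2:ℚ) • w 4 - w 5 - w 6 - w 7 ∧
    ¬ ∃ m : Fin 8 → ℕ, e 0 + e 1 + e 2 + e 3 + e 4 = ∑ i, (m i : ℚ) • w i := by
  refine ⟨?_, ?_, ?_⟩
  · funext j
    fin_cases j <;> simp [e, w0, w1, w2, w3, w4, w5, w6, w7] <;> norm_num
  · funext j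
    fin_cases j <;> simp [e, w0, w1, w2, w3, w4, w5, w6, w7] <;> norm_num
  · rintro ⟨m, hm⟩
    have h0 := congrFun hm 0
    have h1 := congrFun hm 1
    have h2 := congrFun hm 2
    have h3 := congrFun hm 3
    have h4 := congrFun hm 4
    have h5 := congrFun hm 5
    have h6 := congrFun hm 6
    have h7 := congrFun hm 7
    simp [e, w0, w1, w2, w3, w4, w5, w6, w7, Fin.sum_univ_eight] at h0 h1 h2 h3 h4 h5 h6 h7
    have key : (12 * m 0 + 8 * m 1 + 8 * m 2 + 11 * m 3 + 15 * m 4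
        + 4 * m 5 + 4 * m 6 + 4 * m 7 : ℚ) = 18 := by linarith
    have keyN : 12 * m 0 + 8 * m 1 + 8 * m 2 + 11 * m 3 + 15 * m 4
        + 4 * m 5 + 4 * m 6 + 4 * m 7 = 18 := by exact_mod_cast key
    omega
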